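/- For S = {132, 231, 321}, the number of S-avoiding rooted labeled trees on [n] equals n! for all n ≥ 1; such trees are exactly those with arbitrary root label whose forest below the root is increasing. -/

import Mathlib

open Filter

/-- A rooted labeled forest on `Fin n`, encoded by its parent function together
with an acyclicity witness (a depth-like function decreasing along parents). -/
def IsForest (n : ℕ) (p : Fin n → Option (Fin n)) : Prop :=
  ∃ d : Fin n → ℕ, ∀ v w : Fin n, p v = some w → d w < d v

/-- The type of rooted labeled forests on `[n]`. -/
def Forest (n : ℕ) : Type := {p : Fin n → Option (Fin n) // IsForest n p}

/-- `F.Ancestor a b` means `a` is a strict ancestor of `b` in the forest `F`. -/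
def Forest.Ancestor {n : ℕ} (F : Forest n) (a b : Fin n) : Prop :=
  Relation.TransGen (fun x y : Fin n => F.val x = some y) b a

/-- A forest is a tree when it has exactly one root. -/
def Forest.IsTree {n : ℕ} (F : Forest n) : Prop :=
  ∃! v : Fin n, F.val v = none

/-- A pattern: a permutation of `Fin k` for some `k`. -/
abbrev Pattern : Type := Σ k : ℕ, Equiv.Perm (Fin k)

/-- `F` contains an instance of the pattern `π`: a chain of vertices, each an
ancestor of the next, whose labels are in the same relative order as `π`. -/
def Forest.Contains {n : ℕ} (F : Forest n) (π : Pattern) : Prop :=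
  ∃ v : Fin π.1 → Fin n,
    (∀ i j : Fin π.1, i < j → F.Ancestor (v i) (v j)) ∧
    (∀ i j : Fin π.1, π.2 i < π.2 j ↔ v i < v j)

/-- `F` avoids every pattern in `S`. -/
def Forest.AvoidsSet {n : ℕ} (F : Forest n) (S : Set Pattern) : Prop :=
  ∀ π ∈ S, ¬ F.Contains π

/-- The number of rooted labeled forests on `[n]` avoiding `S`. -/
noncomputable def forestCount (S : Set Pattern) (n : ℕ) : ℕ :=
  Nat.card {F : Forest n // F.AvoidsSet S}

/-- The number of rooted labeled trees on `[n]` avoiding `S`. -/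
noncomputable def treeCount (S : Set Pattern) (n : ℕ) : ℕ :=
  Nat.card {F : Forest n // F.IsTree ∧ F.AvoidsSet S}
/-- The pattern 213 (one-line notation, as a permutation of `Fin 3`). -/
noncomputable def p213 : Equiv.Perm (Fin 3) := Equiv.ofBijective ![1, 0, 2] (by decide)
/-- The pattern 231. -/
noncomputable def p231 : Equiv.Perm (Fin 3) := Equiv.ofBijective ![1, 2, 0] (by decide)
/-- The pattern 312. -/
noncomputable def p312 : Equiv.Perm (Fin 3) := Equiv.ofBijective ![2, 0, 1] (by decide)
/-- The pattern 321. -/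
noncomputable def p321 : Equiv.Perm (Fin 3) := Equiv.ofBijective ![2, 1, 0] (by decide)
/-- The pattern 132. -/
noncomputable def p132 : Equiv.Perm (Fin 3) := Equiv.ofBijective ![0, 2, 1] (by decide)

/-!
A forest avoids `{132, 231, 321}` exactly when no non-root vertex has a child with a smaller
label. Indeed, a parent–vertex–child chain `u, v, w` with `w < v` has the pattern `132`, `231` or
`321` according to where `u` sits, and conversely each of the three patterns ends in a descent
whose upper vertex has an ancestor, hence is not a root.

Such a tree is therefore its root `r` together with an arbitrary increasing forest on the other
`n - 1` labels, relabelled monotonically by `Fin (n - 1)`. An increasing forest on `Fin m` is a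
free choice, for each `w`, of a parent among the `w` smaller labels or none, so there are `m!` of
them, and `n * (n - 1)! = n!`.
-/

theorem exists_pattern_132_231_321 {α : Type*} [LinearOrder α] {u v w : α} (hwv : w < v)
    (huv : u ≠ v) (huw : u ≠ w) :
    ∃ π : Equiv.Perm (Fin 3),
      (⟨3, π⟩ : Pattern) ∈ ({⟨3, p132⟩, ⟨3, p231⟩, ⟨3, p321⟩} : Set Pattern) ∧
      ∀ i j : Fin 3, π i < π j ↔ ![u, v, w] i < ![u, v, w] j := by
  refine (lt_or_gt_of_ne huw).elim (fun h => ⟨p132, by simp, ?_⟩) fun h =>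
    (lt_or_gt_of_ne huv).elim (fun h' => ⟨p231, by simp, ?_⟩) fun h' => ⟨p321, by simp, ?_⟩
  all_goals intro i j; fin_cases i <;> fin_cases j <;> simp [p132, p231, p321] <;> order

namespace Forest

variable {n : ℕ} {F : Forest n}

def IsIncreasingBelowRoots (F : Forest n) : Prop :=
  ∀ v w : Fin n, F.val w = some v → F.val v ≠ none → v < w

theorem Ancestor.ne {a b : Fin n} (h : F.Ancestor a b) : a ≠ b := by
  obtain ⟨d, hd⟩ := F.2
  have hlt : d a < d b := by
    induction h with
    | single h => exact hd _ _ h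
    | tail _ h ih => exact (hd _ _ h).trans ih
  exact fun hab => hlt.ne (congrArg d hab)

theorem Ancestor.trans {a b c : Fin n} (hab : F.Ancestor a b) (hbc : F.Ancestor b c) :
    F.Ancestor a c :=
  Relation.TransGen.trans hbc hab

theorem Ancestor.parent_ne_none {a b : Fin n} (h : F.Ancestor a b) : F.val b ≠ none := by
  induction h with
  | single h => simp [h]
  | tail _ _ ih => exact ih

theorem IsIncreasingBelowRoots.lt_of_ancestor (hF : F.IsIncreasingBelowRoots) {a b : Fin n}
    (h : F.Ancestor a b) (ha : F.val a ≠ none) : a < b := by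
  induction h with
  | single h => exact hF _ _ h ha
  | tail _ h ih => exact (hF _ _ h ha).trans (ih (by simp [h]))

theorem IsIncreasingBelowRoots.not_contains (hF : F.IsIncreasingBelowRoots) {π : Pattern}
    {i j k : Fin π.1} (hij : i < j) (hjk : j < k) (hπ : π.2 k < π.2 j) : ¬ F.Contains π := by
  rintro ⟨v, hanc, hord⟩
  have hnonroot : F.val (v j) ≠ none := (hanc i j hij).parent_ne_none
  exact ((hord k j).1 hπ).not_gt (hF.lt_of_ancestor (hanc j k hjk) hnonroot)

theorem contains_of_parent_of_parent {u v w : Fin n} (hv : F.val v = some u)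
    (hw : F.val w = some v) {π : Equiv.Perm (Fin 3)}
    (hπ : ∀ i j : Fin 3, π i < π j ↔ ![u, v, w] i < ![u, v, w] j) : F.Contains ⟨3, π⟩ := by
  have huv : F.Ancestor u v := .single hv
  have hvw : F.Ancestor v w := .single hw
  refine ⟨![u, v, w], fun i j hij => ?_, hπ⟩
  fin_cases i <;> fin_cases j <;> simp at hij ⊢
  exacts [huv, huv.trans hvw, hvw]

theorem avoidsSet_132_231_321_iff :
    F.AvoidsSet {⟨3, p132⟩, ⟨3, p231⟩, ⟨3, p321⟩} ↔ F.IsIncreasingBelowRoots := by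
  constructor
  · intro hA v w hw hv
    obtain ⟨u, hu⟩ := Option.ne_none_iff_exists'.1 hv
    have huv : F.Ancestor u v := .single hu
    have hvw : F.Ancestor v w := .single hw
    by_contra hnlt
    have hwv : w < v := lt_of_le_of_ne (not_lt.1 hnlt) hvw.ne.symm
    obtain ⟨π, hπ, hord⟩ := exists_pattern_132_231_321 hwv huv.ne (huv.trans hvw).ne
    exact hA _ hπ (contains_of_parent_of_parent hu hw hord)
  · rintro hF π hπ
    rcases hπ with rfl | rfl | rfl <;>
      exact hF.not_contains (i := 0) (j := 1) (k := 2) (by decide) (by decide) (by decide)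

end Forest

open Finset Nat

/-- Parent functions of increasing forests on `Fin m`; acyclicity is automatic since labels
decrease towards the roots. -/
def IncreasingForest (m : ℕ) : Type :=
  {p : Fin m → Option (Fin m) // ∀ w, ∀ v ∈ p w, v < w}

theorem card_increasingForest (m : ℕ) : Nat.card (IncreasingForest m) = m ! := by
  have hchoices (w : Fin m) : Nat.card {o : Option (Fin m) // ∀ v ∈ o, v < w} = w + 1 := by
    simp_rw [← Finset.mem_Iio (a := w), ← mem_insertNone, Nat.card_eq_fintype_card,
      Fintype.card_coe, card_insertNone, Fin.card_Iio]
  calc Nat.card (IncreasingForest m)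
      = Nat.card (∀ w : Fin m, {o : Option (Fin m) // ∀ v ∈ o, v < w}) :=
        Nat.card_congr (Equiv.subtypePiEquivPi (p := fun w o => ∀ v ∈ o, v < w))
    _ = ∏ w : Fin m, (w + 1 : ℕ) := by simp_rw [Nat.card_pi, hchoices]
    _ = m ! := by rw [Fin.prod_univ_eq_prod_range (· + 1), prod_range_add_one_eq_factorial]

section RootedTree

variable {m : ℕ}

/-- Under `finSuccEquiv' r : Fin (m + 1) ≃ Option (Fin m)` the root `r` becomes `none` and the
other vertices are relabelled monotonically by `Fin m`; the forest `p` is then hung below `r`. -/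
def rootedParent (r : Fin (m + 1)) (p : Fin m → Option (Fin m)) (v : Fin (m + 1)) :
    Option (Fin (m + 1)) :=
  (finSuccEquiv' r v).map fun i => (finSuccEquiv' r).symm (p i)

theorem rootedParent_self (r : Fin (m + 1)) (p : Fin m → Option (Fin m)) :
    rootedParent r p r = none := by
  simp [rootedParent, finSuccEquiv'_at]

theorem rootedParent_eq_none_iff {r v : Fin (m + 1)} {p : Fin m → Option (Fin m)} :
    rootedParent r p v = none ↔ v = r := by
  rw [rootedParent, Option.map_eq_none_iff, finSuccEquiv'_eq_none, eq_comm]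

theorem rootedParent_succAbove (r : Fin (m + 1)) (p : Fin m → Option (Fin m)) (i : Fin m) :
    rootedParent r p (r.succAbove i) = some ((finSuccEquiv' r).symm (p i)) := by
  simp [rootedParent, finSuccEquiv'_succAbove]

namespace IncreasingForest

theorem isForest_rootedParent (r : Fin (m + 1)) (p : IncreasingForest m) :
    IsForest (m + 1) (rootedParent r p.1) := by
  refine ⟨fun v => (finSuccEquiv' r v).elim 0 (·.val + 1), fun v u h => ?_⟩
  have hv : v ≠ r := by rintro rfl; simp [rootedParent_self] at h
  obtain ⟨i, rfl⟩ := Fin.exists_succAbove_eq hv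
  obtain rfl := Option.some_injective _ ((rootedParent_succAbove r p.1 i).symm.trans h)
  simp only [Equiv.apply_symm_apply, finSuccEquiv'_succAbove, Option.elim_some]
  cases hpi : p.1 i with
  | none => simp
  | some j => simpa using p.2 i j hpi

def toTree (r : Fin (m + 1)) (p : IncreasingForest m) : Forest (m + 1) :=
  ⟨rootedParent r p.1, isForest_rootedParent r p⟩

theorem toTree_isTree (r : Fin (m + 1)) (p : IncreasingForest m) : (toTree r p).IsTree :=
  ⟨r, rootedParent_eq_none_iff.2 rfl, fun _ => rootedParent_eq_none_iff.1⟩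

theorem toTree_isIncreasingBelowRoots (r : Fin (m + 1)) (p : IncreasingForest m) :
    (toTree r p).IsIncreasingBelowRoots := by
  intro u w hw hu
  have hwr : w ≠ r := by rintro rfl; simp [toTree, rootedParent_self] at hw
  obtain ⟨i, rfl⟩ := Fin.exists_succAbove_eq hwr
  obtain rfl := Option.some_injective _ ((rootedParent_succAbove r p.1 i).symm.trans hw)
  cases hpi : p.1 i with
  | none => simp [toTree, rootedParent_eq_none_iff, hpi] at hu
  | some j => simpa [hpi] using p.2 i j hpi

end IncreasingForest

def toRootedTree (x : Fin (m + 1) × IncreasingForest m) :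
    {F : Forest (m + 1) // F.IsTree ∧ F.IsIncreasingBelowRoots} :=
  ⟨x.2.toTree x.1, x.2.toTree_isTree x.1, x.2.toTree_isIncreasingBelowRoots x.1⟩

theorem toRootedTree_injective : Function.Injective (toRootedTree (m := m)) := by
  rintro ⟨r, p⟩ ⟨r', p'⟩ h
  have hval : rootedParent r p.1 = rootedParent r' p'.1 := congrArg (fun F => F.1.1) h
  obtain rfl : r = r' := rootedParent_eq_none_iff.1 (hval ▸ rootedParent_self r p.1)
  refine Prod.ext rfl (Subtype.ext (funext fun i => (finSuccEquiv' r).symm.injective ?_))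
  apply Option.some_injective
  rw [← rootedParent_succAbove, hval, rootedParent_succAbove]

theorem toRootedTree_surjective : Function.Surjective (toRootedTree (m := m)) := by
  rintro ⟨F, ⟨r, hr, huniq⟩, hF⟩
  have hnonroot (v : Fin (m + 1)) (hv : v ≠ r) : F.val v ≠ none := fun h => hv (huniq v h)
  have hp (i : Fin m) : ∀ j ∈ (F.val (r.succAbove i)).bind (finSuccEquiv' r), j < i := by
    intro j hj
    obtain ⟨u, hu, hju⟩ := Option.mem_bind_iff.1 hj
    obtain rfl : u = r.succAbove j := by
      simpa using ((finSuccEquiv' r).symm_apply_eq.2 (Option.mem_def.1 hju).symm).symm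
    exact Fin.succAbove_lt_succAbove_iff.1 (hF _ _ hu (hnonroot _ (Fin.succAbove_ne r j)))
  refine ⟨(r, ⟨_, hp⟩), Subtype.ext (Subtype.ext (funext fun v => ?_))⟩
  change rootedParent r _ v = F.val v
  by_cases hv : v = r
  · rw [hv, rootedParent_self, hr]
  · obtain ⟨i, rfl⟩ := Fin.exists_succAbove_eq hv
    obtain ⟨u, hu⟩ := Option.ne_none_iff_exists'.1 (hnonroot _ hv)
    simp [rootedParent_succAbove, hu]

theorem card_isTree_isIncreasingBelowRoots (m : ℕ) :
    Nat.card {F : Forest (m + 1) // F.IsTree ∧ F.IsIncreasingBelowRoots} = (m + 1)! := by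
  rw [← Nat.card_eq_of_bijective _ ⟨toRootedTree_injective, toRootedTree_surjective⟩,
    Nat.card_prod, card_increasingForest, Nat.card_eq_fintype_card, Fintype.card_fin,
    factorial_succ]

end RootedTree

/-- For `S = {132, 231, 321}`: the number of `S`-avoiding trees on `[n]` is
`n!` for `n ≥ 1`, and the `S`-avoiding trees are exactly those whose forest
below the root is increasing (every non-root parent has a smaller label than
its children). -/
theorem treeCount_132_231_321 :
    (∀ n : ℕ, 1 ≤ n →
      treeCount {⟨3, p132⟩, ⟨3, p231⟩, ⟨3, p321⟩} n = Nat.factorial n) ∧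
    (∀ n : ℕ, ∀ F : Forest n, F.IsTree →
      (F.AvoidsSet {⟨3, p132⟩, ⟨3, p231⟩, ⟨3, p321⟩} ↔
        ∀ v w : Fin n, F.val w = some v → F.val v ≠ none → v < w)) := by
  refine ⟨fun n hn => ?_, fun n F _ => Forest.avoidsSet_132_231_321_iff⟩
  obtain ⟨m, rfl⟩ := Nat.exists_eq_add_of_le' hn
  rw [treeCount, ← card_isTree_isIncreasingBelowRoots]
  exact Nat.card_congr <| Equiv.subtypeEquivRight fun F =>
    and_congr_right fun _ => Forest.avoidsSet_132_231_321_iff
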